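/- Let (H,α) be a monoidal Hom-bialgebra over a commutative ring k and let (M,μ), (N,ν), (P,π) be right-right Yetter-Drinfel'd (H,α)-Hom-modules. Define ã_{M,N,P}:(M⊗N)⊗P→M⊗(N⊗P) by ã((m⊗n)⊗p)=μ(m)⊗(n⊗π⁻¹(p)) and c_{M,N}:M⊗N→N⊗M by c_{M,N}(m⊗n)=ν(n₍₀₎)⊗(μ⁻¹(m)◁n₍₁₎). Then both hexagon identities hold: ã_{N,P,M}∘c_{M,N⊗P}∘ã_{M,N,P} = (id_N⊗c_{M,P})∘ã_{N,M,P}∘(c_{M,N}⊗id_P) on (M⊗N)⊗P, and ã⁻¹_{P,M,N}∘c_{M⊗N,P}∘ã⁻¹_{M,N,P} = (c_{M,P}⊗id_N)∘ã⁻¹_{M,P,N}∘(id_M⊗c_{N,P}) on M⊗(N⊗P), where tensor products of Yetter-Drinfel'd Hom-modules carry the diagonal action and codiagonal coaction. -/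
import Mathlib


open TensorProduct

noncomputable def tmul2 {k A B C D E F : Type*} [CommRing k]
    [AddCommGroup A] [AddCommGroup B] [AddCommGroup C] [AddCommGroup D]
    [AddCommGroup E] [AddCommGroup F]
    [Module k A] [Module k B] [Module k C] [Module k D] [Module k E] [Module k F]
    (f : A →ₗ[k] C →ₗ[k] E) (g : B →ₗ[k] D →ₗ[k] F) :
    (A ⊗[k] B) →ₗ[k] (C ⊗[k] D) →ₗ[k] (E ⊗[k] F) :=
  TensorProduct.curry
    ((TensorProduct.map (TensorProduct.lift f) (TensorProduct.lift g)) ∘ₗ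
      (TensorProduct.tensorTensorTensorComm k A B C D).toLinearMap)

/-- A monoidal Hom-bialgebra over a commutative ring `k`. -/
structure MonHomBialg (k H : Type*) [CommRing k] [AddCommGroup H] [Module k H] where
  α : H ≃ₗ[k] H
  mul : H →ₗ[k] H →ₗ[k] H
  one : H
  comul : H →ₗ[k] H ⊗[k] H
  counit : H →ₗ[k] k
  alpha_mul : ∀ g h, α (mul g h) = mul (α g) (α h)
  alpha_one : α one = one
  hom_assoc : ∀ g h l, mul (α g) (mul h l) = mul (mul g h) (α l)
  mul_one' : ∀ h, mul h one = α h
  one_mul' : ∀ h, mul one h = α h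
  comul_alpha : ∀ h, comul (α h)
    = TensorProduct.map α.toLinearMap α.toLinearMap (comul h)
  counit_alpha : ∀ h, counit (α h) = counit h
  hom_coassoc : ∀ h,
    (TensorProduct.assoc k H H H) ((TensorProduct.map comul α.symm.toLinearMap) (comul h))
      = (TensorProduct.map α.symm.toLinearMap comul) (comul h)
  counit_comul_left : ∀ h,
    (TensorProduct.lid k H) ((TensorProduct.map counit LinearMap.id) (comul h)) = α.symm h
  counit_comul_right : ∀ h,
    (TensorProduct.rid k H) ((TensorProduct.map LinearMap.id counit) (comul h)) = α.symm h
  comul_mul : ∀ g h, comul (mul g h) = tmul2 mul mul (comul g) (comul h)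
  comul_one : comul one = one ⊗ₜ[k] one
  counit_mul : ∀ g h, counit (mul g h) = counit g * counit h
  counit_one : counit one = 1

/-- A right-right Yetter-Drinfel'd Hom-module over `MonHomBialg`. -/
structure YDmodB {k H : Type*} [CommRing k] [AddCommGroup H] [Module k H]
    (A : MonHomBialg k H) (N : Type*) [AddCommGroup N] [Module k N] where
  ν : N ≃ₗ[k] N
  act : N →ₗ[k] H →ₗ[k] N
  act_assoc : ∀ n g h, act (ν n) (A.mul g h) = act (act n g) (A.α h)
  act_one : ∀ n, act n A.one = ν n
  nu_act : ∀ n h, ν (act n h) = act (ν n) (A.α h)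
  coact : N →ₗ[k] N ⊗[k] H
  coact_coassoc : ∀ n,
    (TensorProduct.map coact A.α.symm.toLinearMap) (coact n)
      = (TensorProduct.assoc k N H H).symm
          ((TensorProduct.map ν.symm.toLinearMap A.comul) (coact n))
  coact_counit : ∀ n,
    (TensorProduct.rid k N) ((TensorProduct.map (LinearMap.id : N →ₗ[k] N) A.counit) (coact n))
      = ν.symm n
  coact_nu : ∀ n, coact (ν n) = TensorProduct.map ν.toLinearMap A.α.toLinearMap (coact n)
  yd : ∀ n h,
    tmul2 (act.compl₂ A.α.symm.toLinearMap) (A.mul.compl₂ A.α.symm.toLinearMap)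
        (coact n) (A.comul h)
      = ((TensorProduct.map (LinearMap.id : N →ₗ[k] N)
            (A.α.symm.toLinearMap ∘ₗ TensorProduct.lift A.mul)) ∘ₗ
          (TensorProduct.leftComm k H N H).toLinearMap)
          ((TensorProduct.map (LinearMap.id : H →ₗ[k] H) (coact ∘ₗ act n)) (A.comul h))

/-- The diagonal right Hom-action on a tensor product: `(m ⊗ n) ◁ h = (m ◁ h₁) ⊗ (n ◁ h₂)`. -/
noncomputable def dAct {k H M N : Type*} [CommRing k] [AddCommGroup H] [Module k H]
    [AddCommGroup M] [Module k M] [AddCommGroup N] [Module k N]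
    (A : MonHomBialg k H)
    (actM : M →ₗ[k] H →ₗ[k] M) (actN : N →ₗ[k] H →ₗ[k] N) :
    (M ⊗[k] N) →ₗ[k] H →ₗ[k] (M ⊗[k] N) :=
  (tmul2 actM actN).compl₂ A.comul

/-- The codiagonal right Hom-coaction on a tensor product:
`(m ⊗ n) ↦ (m₍₀₎ ⊗ n₍₀₎) ⊗ m₍₁₎ n₍₁₎`. -/
noncomputable def dCoact {k H M N : Type*} [CommRing k] [AddCommGroup H] [Module k H]
    [AddCommGroup M] [Module k M] [AddCommGroup N] [Module k N]
    (A : MonHomBialg k H)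
    (cM : M →ₗ[k] M ⊗[k] H) (cN : N →ₗ[k] N ⊗[k] H) :
    (M ⊗[k] N) →ₗ[k] (M ⊗[k] N) ⊗[k] H :=
  (TensorProduct.map (LinearMap.id : M ⊗[k] N →ₗ[k] M ⊗[k] N) (TensorProduct.lift A.mul)) ∘ₗ
    (TensorProduct.tensorTensorTensorComm k M H N H).toLinearMap ∘ₗ
    (TensorProduct.map cM cN)

/-- The (pre-)braiding `c(m ⊗ n) = ν(n₍₀₎) ⊗ (μ⁻¹(m) ◁ n₍₁₎)`. -/
noncomputable def braid {k H M N : Type*} [CommRing k] [AddCommGroup H] [Module k H]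
    [AddCommGroup M] [Module k M] [AddCommGroup N] [Module k N]
    (νM : M ≃ₗ[k] M) (actM : M →ₗ[k] H →ₗ[k] M)
    (νN : N ≃ₗ[k] N) (cN : N →ₗ[k] N ⊗[k] H) :
    (M ⊗[k] N) →ₗ[k] (N ⊗[k] M) :=
  (TensorProduct.map νN.toLinearMap (TensorProduct.lift (actM ∘ₗ νM.symm.toLinearMap))) ∘ₗ
    (TensorProduct.leftComm k M N H).toLinearMap ∘ₗ
    (TensorProduct.map (LinearMap.id : M →ₗ[k] M) cN)

/-- The Hom-associator `ã((m ⊗ n) ⊗ p) = μ(m) ⊗ (n ⊗ π⁻¹(p))`. -/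
noncomputable def aYD {k M N P : Type*} [CommRing k]
    [AddCommGroup M] [Module k M] [AddCommGroup N] [Module k N] [AddCommGroup P] [Module k P]
    (νM : M ≃ₗ[k] M) (νP : P ≃ₗ[k] P) :
    ((M ⊗[k] N) ⊗[k] P) →ₗ[k] (M ⊗[k] (N ⊗[k] P)) :=
  (TensorProduct.map νM.toLinearMap
      (TensorProduct.map (LinearMap.id : N →ₗ[k] N) νP.symm.toLinearMap)) ∘ₗ
    (TensorProduct.assoc k M N P).toLinearMap

/-- The inverse Hom-associator `ã⁻¹(m ⊗ (n ⊗ p)) = (μ⁻¹(m) ⊗ n) ⊗ π(p)`. -/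
noncomputable def aYDinv {k M N P : Type*} [CommRing k]
    [AddCommGroup M] [Module k M] [AddCommGroup N] [Module k N] [AddCommGroup P] [Module k P]
    (νM : M ≃ₗ[k] M) (νP : P ≃ₗ[k] P) :
    (M ⊗[k] (N ⊗[k] P)) →ₗ[k] ((M ⊗[k] N) ⊗[k] P) :=
  (TensorProduct.map
      (TensorProduct.map νM.symm.toLinearMap (LinearMap.id : N →ₗ[k] N)) νP.toLinearMap) ∘ₗ
    (TensorProduct.assoc k M N P).symm.toLinearMap


section AuxHex
variable {k H : Type*} [CommRing k] [AddCommGroup H]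
    [Module k H] {A : MonHomBialg k H} {M N P : Type*} [AddCommGroup M] [Module k M]
    [AddCommGroup N] [Module k N] [AddCommGroup P] [Module k P]
    (YM : YDmodB A M) (YN : YDmodB A N) (YP : YDmodB A P)

private lemma hex1_aux (m : M) (n : N) (p : P) :
      aYD (N := P) YN.ν YM.ν
          (braid YM.ν YM.act (TensorProduct.congr YN.ν YP.ν) (dCoact A YN.coact YP.coact)
            (aYD (N := N) YM.ν YP.ν ((m ⊗ₜ n) ⊗ₜ p)))
        = (TensorProduct.map (LinearMap.id : N →ₗ[k] N) (braid YM.ν YM.act YP.ν YP.coact))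
            (aYD (N := M) YN.ν YP.ν
              ((TensorProduct.map (braid YM.ν YM.act YN.ν YN.coact)
                (LinearMap.id : P →ₗ[k] P)) ((m ⊗ₜ n) ⊗ₜ p))) := by
  simp only [aYD, braid, dCoact, tmul2, LinearMap.comp_apply, LinearEquiv.coe_coe,
    TensorProduct.map_tmul, TensorProduct.assoc_tmul, TensorProduct.leftComm_tmul,
    TensorProduct.lift.tmul, LinearMap.id_coe, id_eq]
  induction YN.coact n using TensorProduct.induction_on with
  | zero => simp
  | add x y hx hy => simp only [TensorProduct.add_tmul, TensorProduct.tmul_add, map_add, hx, hy]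
  | tmul a b =>
    simp only [TensorProduct.map_tmul, TensorProduct.leftComm_tmul, TensorProduct.assoc_tmul,
      TensorProduct.lift.tmul, LinearMap.comp_apply, LinearEquiv.coe_coe, LinearMap.id_coe, id_eq,
      TensorProduct.congr_tmul, TensorProduct.tensorTensorTensorComm_tmul]
    induction YP.coact (YP.ν.symm p) using TensorProduct.induction_on with
    | zero => simp
    | add x y hx hy => simp only [TensorProduct.add_tmul, TensorProduct.tmul_add, map_add, hx, hy]
    | tmul c d =>
      simp only [TensorProduct.map_tmul, TensorProduct.leftComm_tmul, TensorProduct.assoc_tmul,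
        TensorProduct.lift.tmul, LinearMap.comp_apply, LinearEquiv.coe_coe, LinearMap.id_coe,
        id_eq, TensorProduct.congr_tmul, TensorProduct.tensorTensorTensorComm_tmul]
      rw [LinearEquiv.symm_apply_apply]
      have h1 := YM.act_assoc (YM.ν.symm m) b d
      rw [LinearEquiv.apply_symm_apply] at h1
      rw [h1]
      have h2 := YM.nu_act (YM.ν.symm ((YM.act (YM.ν.symm m)) b)) d
      rw [LinearEquiv.apply_symm_apply] at h2
      rw [← h2, LinearEquiv.symm_apply_apply]
private lemma hex2_aux (m : M) (n : N) (p : P) :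
      aYDinv (N := M) YP.ν YN.ν
          (braid (TensorProduct.congr YM.ν YN.ν) (dAct A YM.act YN.act) YP.ν YP.coact
            (aYDinv (N := N) YM.ν YP.ν (m ⊗ₜ (n ⊗ₜ p))))
        = (TensorProduct.map (braid YM.ν YM.act YP.ν YP.coact) (LinearMap.id : N →ₗ[k] N))
            (aYDinv (N := P) YM.ν YN.ν
              ((TensorProduct.map (LinearMap.id : M →ₗ[k] M)
                (braid YN.ν YN.act YP.ν YP.coact)) (m ⊗ₜ (n ⊗ₜ p)))) := by
  have hco : YP.coact (YP.ν p)
      = TensorProduct.map YP.ν.toLinearMap A.α.toLinearMap (YP.coact p) := YP.coact_nu p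
  simp only [aYDinv, braid, dAct, tmul2, LinearMap.comp_apply, LinearEquiv.coe_coe,
    TensorProduct.map_tmul, TensorProduct.assoc_symm_tmul, TensorProduct.leftComm_tmul,
    TensorProduct.lift.tmul, LinearMap.id_coe, id_eq, hco]
  set Λ : ((P ⊗[k] H) ⊗[k] H) →ₗ[k] ((P ⊗[k] M) ⊗[k] N) :=
    TensorProduct.map (TensorProduct.map YP.ν.toLinearMap (YM.act (YM.ν.symm (YM.ν.symm m))))
      (YN.act n ∘ₗ A.α.toLinearMap) with hΛ
  set X : ((P ⊗[k] H) ⊗[k] H) →ₗ[k] ((P ⊗[k] H) ⊗[k] H) :=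
    TensorProduct.map (TensorProduct.map YP.ν.toLinearMap A.α.toLinearMap) A.α.toLinearMap
    with hX
  calc _ = Λ (X ((TensorProduct.assoc k P H H).symm
            ((TensorProduct.map YP.ν.symm.toLinearMap A.comul) (YP.coact p)))) := ?_
    _ = Λ (X ((TensorProduct.map YP.coact A.α.symm.toLinearMap) (YP.coact p))) := by
          rw [YP.coact_coassoc]
    _ = _ := ?_
  · -- LHS = Λ(X(assoc form))
    induction YP.coact p using TensorProduct.induction_on with
    | zero => simp
    | add x y hx hy => simp only [TensorProduct.add_tmul, TensorProduct.tmul_add, map_add, hx, hy]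
    | tmul a b =>
      simp only [TensorProduct.map_tmul, TensorProduct.leftComm_tmul,
        TensorProduct.assoc_symm_tmul, TensorProduct.lift.tmul, LinearMap.comp_apply,
        LinearEquiv.coe_coe, LinearMap.id_coe, id_eq, TensorProduct.congr_symm_tmul,
        LinearMap.compl₂_apply, TensorProduct.curry_apply,
        TensorProduct.tensorTensorTensorComm_tmul, A.comul_alpha]
      induction A.comul b using TensorProduct.induction_on with
      | zero => simp
      | add x y hx hy =>
        simp only [TensorProduct.add_tmul, TensorProduct.tmul_add, map_add, hx, hy]
      | tmul u v =>
        simp only [TensorProduct.map_tmul, TensorProduct.assoc_symm_tmul,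
          TensorProduct.tensorTensorTensorComm_tmul, TensorProduct.lift.tmul,
          LinearMap.comp_apply, LinearEquiv.coe_coe, LinearMap.id_coe, id_eq, hΛ, hX,
          LinearEquiv.apply_symm_apply, LinearEquiv.symm_apply_apply]
        have h2 := YM.nu_act (YM.ν.symm ((YM.act (YM.ν.symm m)) b)) v
        have h3 := YN.nu_act (YN.ν.symm n) (A.α v)
        rw [LinearEquiv.apply_symm_apply] at h3
        rw [h3]
  · -- Λ(X(coact form)) = RHS
    induction YP.coact p using TensorProduct.induction_on with
    | zero => simp
    | add x y hx hy => simp only [TensorProduct.add_tmul, TensorProduct.tmul_add, map_add, hx, hy]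
    | tmul a b =>
      simp only [TensorProduct.map_tmul, TensorProduct.leftComm_tmul,
        TensorProduct.assoc_symm_tmul, TensorProduct.lift.tmul, LinearMap.comp_apply,
        LinearEquiv.coe_coe, LinearMap.id_coe, id_eq]
      rw [YP.coact_nu a]
      induction YP.coact a using TensorProduct.induction_on with
      | zero => simp
      | add x y hx hy =>
        simp only [TensorProduct.add_tmul, TensorProduct.tmul_add, map_add, hx, hy]
      | tmul c d =>
        simp only [TensorProduct.map_tmul, TensorProduct.leftComm_tmul,
          TensorProduct.lift.tmul, LinearMap.comp_apply, LinearEquiv.coe_coe,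
          LinearMap.id_coe, id_eq, hΛ, hX, LinearEquiv.apply_symm_apply]
        have h3 := YN.nu_act (YN.ν.symm n) b
        rw [LinearEquiv.apply_symm_apply] at h3
        rw [h3]
end AuxHex

/-- both hexagon identities hold for the braiding and the Hom-associator
on Yetter-Drinfel'd Hom-modules. -/
theorem hexagon_identities_yetter_drinfeld {k H : Type*} [CommRing k] [AddCommGroup H]
    [Module k H] (A : MonHomBialg k H) {M N P : Type*} [AddCommGroup M] [Module k M]
    [AddCommGroup N] [Module k N] [AddCommGroup P] [Module k P]
    (YM : YDmodB A M) (YN : YDmodB A N) (YP : YDmodB A P) :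
    (∀ x : (M ⊗[k] N) ⊗[k] P,
      aYD (N := P) YN.ν YM.ν
          (braid YM.ν YM.act (TensorProduct.congr YN.ν YP.ν) (dCoact A YN.coact YP.coact)
            (aYD (N := N) YM.ν YP.ν x))
        = (TensorProduct.map (LinearMap.id : N →ₗ[k] N) (braid YM.ν YM.act YP.ν YP.coact))
            (aYD (N := M) YN.ν YP.ν
              ((TensorProduct.map (braid YM.ν YM.act YN.ν YN.coact)
                (LinearMap.id : P →ₗ[k] P)) x))) ∧
    (∀ y : M ⊗[k] (N ⊗[k] P),
      aYDinv (N := M) YP.ν YN.ν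
          (braid (TensorProduct.congr YM.ν YN.ν) (dAct A YM.act YN.act) YP.ν YP.coact
            (aYDinv (N := N) YM.ν YP.ν y))
        = (TensorProduct.map (braid YM.ν YM.act YP.ν YP.coact) (LinearMap.id : N →ₗ[k] N))
            (aYDinv (N := P) YM.ν YN.ν
              ((TensorProduct.map (LinearMap.id : M →ₗ[k] M)
                (braid YN.ν YN.act YP.ν YP.coact)) y))) := by
  constructor
  · intro x
    induction x using TensorProduct.induction_on with
    | zero => simp
    | add u v hu hv => simp only [map_add, hu, hv]
    | tmul mn p =>
      induction mn using TensorProduct.induction_on with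
      | zero => simp
      | add u v hu hv => simp only [TensorProduct.add_tmul, map_add, hu, hv]
      | tmul m n => exact hex1_aux YM YN YP m n p
  · intro y
    induction y using TensorProduct.induction_on with
    | zero => simp
    | add u v hu hv => simp only [map_add, hu, hv]
    | tmul m np =>
      induction np using TensorProduct.induction_on with
      | zero => simp
      | add u v hu hv => simp only [TensorProduct.tmul_add, map_add, hu, hv]
      | tmul n p => exact hex2_aux YM YN YP m n p
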